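/- arXiv:2109.02483 — 2 statements merged into one kernel-verified Lean document; each statement's English description precedes it below -/
import Mathlib

section
/- For every integer n ≥ 1, every κ > 0, and every r > 0, one has (n+1)·κ·∫₀ʳ sinh(κt)ⁿ dt ≥ sinh(κr)ⁿ · tanh(κr). -/
/-!
Write `F(x) = sinh x ^ n * tanh x = sinh x ^ (n+1) / cosh x`. Then
`F' = (n+1) sinh x ^ n - sinh x ^ n tanh x ^ 2 ≤ (n+1) sinh x ^ n` for `x ≥ 0`, and `F 0 = 0`,
so integrating from `0` to `κ r` and substituting `x = κ t` gives the inequality.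
-/

open Real intervalIntegral

namespace Real

theorem sinh_pow_mul_tanh (n : ℕ) (x : ℝ) : sinh x ^ n * tanh x = sinh x ^ (n + 1) / cosh x := by
  rw [tanh_eq_sinh_div_cosh, pow_succ, mul_div_assoc]

theorem hasDerivAt_sinh_pow_succ_div_cosh (n : ℕ) (x : ℝ) :
    HasDerivAt (fun x => sinh x ^ (n + 1) / cosh x)
      ((n + 1) * sinh x ^ n - sinh x ^ n * tanh x ^ 2) x := by
  refine (((hasDerivAt_sinh x).pow (n + 1)).div (hasDerivAt_cosh x) (cosh_pos x).ne').congr_deriv ?_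
  rw [tanh_eq_sinh_div_cosh, Pi.pow_apply]
  field_simp
  push_cast
  ring

theorem sinh_pow_mul_tanh_le_integral (n : ℕ) {x : ℝ} (hx : 0 ≤ x) :
    sinh x ^ n * tanh x ≤ (n + 1) * ∫ t in (0 : ℝ)..x, sinh t ^ n := by
  have hF := hasDerivAt_sinh_pow_succ_div_cosh n
  have hbound : ∀ t ∈ Set.Ioo 0 x,
      (n + 1) * sinh t ^ n - sinh t ^ n * tanh t ^ 2 ≤ (n + 1) * sinh t ^ n := by
    intro t ht
    have hsinh : 0 ≤ sinh t := sinh_nonneg_iff.2 ht.1.le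
    exact sub_le_self _ (mul_nonneg (pow_nonneg hsinh n) (sq_nonneg _))
  have key := sub_le_integral_of_hasDeriv_right_of_le hx
    (fun t _ => (hF t).continuousAt.continuousWithinAt) (fun t _ => (hF t).hasDerivWithinAt)
    (by fun_prop : Continuous fun t => ((n : ℝ) + 1) * sinh t ^ n).integrableOn_Icc hbound
  rw [integral_const_mul] at key
  simpa [sinh_pow_mul_tanh] using key

end Real

theorem stmt_1_general (n : ℕ) (κ r : ℝ) (hκ : 0 < κ) (hr : 0 < r) :
    Real.sinh (κ * r) ^ n * Real.tanh (κ * r) ≤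
      ((n : ℝ) + 1) * κ * ∫ t in (0:ℝ)..r, Real.sinh (κ * t) ^ n := by
  rw [integral_comp_mul_left (fun t => sinh t ^ n) hκ.ne', mul_zero, smul_eq_mul, mul_assoc,
    mul_inv_cancel_left₀ hκ.ne']
  exact sinh_pow_mul_tanh_le_integral n (mul_nonneg hκ.le hr.le)

/-- `(n+1)·κ·∫₀ʳ sinh(κt)ⁿ dt ≥ sinh(κr)ⁿ · tanh(κr)`. -/
theorem stmt_1 (n : ℕ) (hn : 1 ≤ n) (κ r : ℝ) (hκ : 0 < κ) (hr : 0 < r) :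
    Real.sinh (κ * r) ^ n * Real.tanh (κ * r) ≤
      ((n : ℝ) + 1) * κ * ∫ t in (0:ℝ)..r, Real.sinh (κ * t) ^ n :=
  stmt_1_general n κ r hκ hr
end

section
/- Let X be a compact metric measure space with measure 𝓗ᵏ, and suppose the Poincaré inequality ∫_X |f − ⨍_X f| ≤ C·∫_X |df| holds for all Lipschitz functions f on X (where ⨍ denotes the average and |df| is the pointwise Lipschitz constant). Suppose X = A ∪ S ∪ B where A, B are open, disjoint, with 𝓗ᵏ(A) > 0 and 𝓗ᵏ(B) > 0. If there exists a family of Lipschitz functions f_t (t → 0) with f_t = c_B < 0 on B, f_t = c_A > 0 on A, |f_t| ≤ M, |df_t| supported on S_t ⊇ S with (1/t)·𝓗ᵏ(S_t) → 0 and |df_t| ≤ M/t, then 𝓗ᵏ(A)·𝓗ᵏ(B) = 0 — a contradiction. Hence no such decomposition with both 𝓗ᵏ(A), 𝓗ᵏ(B) > 0 and 𝓗ᵏ-negligible separating collar growth exists. -/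
open MeasureTheory Filter

/-!
If `f` equals `c_A` on `A` and `c_B` on `B`, then for every constant `a` the mean oscillation
`∫ |f - a|` is at least `min(μ A, μ B) · |c_A - c_B|`; in particular the left side of the
Poincaré inequality stays bounded below along the family `f_t`. On the other hand
`Lip f_t ≤ M / t` and vanishes off `S_t`, so the right side is at most `C · M · μ(S_t) / t → 0`.
-/

/-- Pointwise Lipschitz constant `Lip f(x) = limsup_{y → x, y ≠ x} |f x − f y| / d(x,y)`. -/
noncomputable def lipConst {X : Type*} [MetricSpace X] (f : X → ℝ) (x : X) : ℝ :=
  Filter.limsup (fun y => |f x - f y| / dist x y) (nhdsWithin x {x}ᶜ)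

/-- The `limsup` defining `lipConst` is taken in `ℝ`, where `sInf` of an unbounded set is `0`;
this covers isolated points, at which the filter is `⊥`. -/
lemma lipConst_nonneg {X : Type*} [MetricSpace X] (f : X → ℝ) (x : X) :
    0 ≤ lipConst f x := by
  rw [lipConst, Filter.limsup_eq]
  rcases eq_or_neBot (nhdsWithin x {x}ᶜ) with h | h
  · rw [h, Real.sInf_of_not_bddBelow]
    rintro ⟨b, hb⟩
    have : b - 1 ∈ {a : ℝ | ∀ᶠ y in (⊥ : Filter X), |f x - f y| / dist x y ≤ a} := by simp
    linarith [hb this]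
  · refine Real.sInf_nonneg fun a ha => ?_
    obtain ⟨y, hy⟩ := (show ∀ᶠ y in nhdsWithin x {x}ᶜ, |f x - f y| / dist x y ≤ a from ha).exists
    exact (div_nonneg (abs_nonneg _) dist_nonneg).trans hy

section

variable {X : Type*} [MeasurableSpace X] {μ : Measure X}

lemma integral_le_mul_measureReal_of_le_of_eq_zero {g : X → ℝ} {s : Set X} {L : ℝ}
    (hL : 0 ≤ L) (hg_nonneg : ∀ x, 0 ≤ g x) (hg_le : ∀ x, g x ≤ L)
    (hg_zero : ∀ x ∉ s, g x = 0) [IsFiniteMeasure μ] :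
    ∫ x, g x ∂μ ≤ L * μ.real s := by
  have hg_ind : ∀ x, ENNReal.ofReal ‖g x‖ ≤ s.indicator (fun _ => ENNReal.ofReal L) x := by
    intro x
    by_cases hx : x ∈ s
    · rw [Set.indicator_of_mem hx, Real.norm_of_nonneg (hg_nonneg x)]
      exact ENNReal.ofReal_le_ofReal (hg_le x)
    · simp [hg_zero x hx]
  calc ∫ x, g x ∂μ ≤ (∫⁻ x, ENNReal.ofReal ‖g x‖ ∂μ).toReal :=
        (Real.le_norm_self _).trans (norm_integral_le_lintegral_norm _)
    _ ≤ (ENNReal.ofReal L * μ s).toReal := by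
        refine ENNReal.toReal_mono (by finiteness) ?_
        exact (lintegral_mono hg_ind).trans (lintegral_indicator_const_le _ _)
    _ = L * μ.real s := by rw [ENNReal.toReal_mul, ENNReal.toReal_ofReal hL, measureReal_def]

lemma min_measureReal_mul_le_integral_abs_sub [IsFiniteMeasure μ] {g : X → ℝ}
    (hg : Integrable g μ) {A B : Set X} (hA : MeasurableSet A) (hB : MeasurableSet B)
    (hAB : Disjoint A B) {cA cB : ℝ} (hgA : ∀ x ∈ A, g x = cA) (hgB : ∀ x ∈ B, g x = cB)
    (a : ℝ) : min (μ.real A) (μ.real B) * |cA - cB| ≤ ∫ x, |g x - a| ∂μ := by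
  have hint : Integrable (fun x => |g x - a|) μ := (hg.sub (integrable_const a)).abs
  have hA_int : ∫ x in A, |g x - a| ∂μ = μ.real A * |cA - a| := by
    rw [setIntegral_congr_fun hA fun x hx => by rw [hgA x hx], setIntegral_const, smul_eq_mul]
  have hB_int : ∫ x in B, |g x - a| ∂μ = μ.real B * |a - cB| := by
    rw [setIntegral_congr_fun hB fun x hx => by rw [hgB x hx, abs_sub_comm],
      setIntegral_const, smul_eq_mul]
  calc min (μ.real A) (μ.real B) * |cA - cB|
      ≤ min (μ.real A) (μ.real B) * (|cA - a| + |a - cB|) := by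
        gcongr; exact abs_sub_le _ _ _
    _ ≤ μ.real A * |cA - a| + μ.real B * |a - cB| := by
        rw [mul_add]
        gcongr
        exacts [min_le_left _ _, min_le_right _ _]
    _ = ∫ x in A ∪ B, |g x - a| ∂μ := by
        rw [setIntegral_union hAB hB hint.integrableOn hint.integrableOn, hA_int, hB_int]
    _ ≤ ∫ x, |g x - a| ∂μ := setIntegral_le_integral hint (.of_forall fun _ => abs_nonneg _)

end

theorem stmt_16_general {X : Type*} [MetricSpace X] [CompactSpace X]
    [MeasurableSpace X] [BorelSpace X]
    (μ : Measure X) [IsFiniteMeasure μ] (C : ℝ) (hC : 0 < C)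
    (hPoincare : ∀ f : X → ℝ, (∃ K : NNReal, LipschitzWith K f) →
      ∫ x, |f x - ⨍ y, f y ∂μ| ∂μ ≤ C * ∫ x, lipConst f x ∂μ)
    (A B : Set X) (hA : IsOpen A) (hB : IsOpen B) (hAB : Disjoint A B)
    (hμA : 0 < μ A) (hμB : 0 < μ B)
    (cA cB M : ℝ) (hcA : 0 < cA) (hcB : cB < 0) (hM : 0 < M)
    (t : ℕ → ℝ) (htpos : ∀ i, 0 < t i)
    (f : ℕ → X → ℝ) (hfLip : ∀ i, ∃ K : NNReal, LipschitzWith K (f i))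
    (hfA : ∀ i, ∀ x ∈ A, f i x = cA) (hfB : ∀ i, ∀ x ∈ B, f i x = cB)
    (St : ℕ → Set X)
    (hgradsupp : ∀ i, ∀ x ∉ St i, lipConst (f i) x = 0)
    (hgradbd : ∀ i x, lipConst (f i) x ≤ M / t i)
    (hSt : Tendsto (fun i => (1 / t i) * (μ (St i)).toReal) atTop (nhds 0)) :
    False := by
  have hgap : 0 < min (μ.real A) (μ.real B) * |cA - cB| :=
    mul_pos (lt_min (ENNReal.toReal_pos hμA.ne' (by finiteness))
      (ENNReal.toReal_pos hμB.ne' (by finiteness))) (abs_pos.2 (by linarith))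
  have hbound : ∀ i, min (μ.real A) (μ.real B) * |cA - cB|
      ≤ C * M * ((1 / t i) * (μ (St i)).toReal) := fun i => by
    obtain ⟨K, hK⟩ := hfLip i
    have hint : Integrable (f i) μ :=
      hK.continuous.integrable_of_hasCompactSupport (.of_compactSpace _)
    calc min (μ.real A) (μ.real B) * |cA - cB| ≤ ∫ x, |f i x - ⨍ y, f i y ∂μ| ∂μ :=
          min_measureReal_mul_le_integral_abs_sub hint hA.measurableSet hB.measurableSet hAB
            (hfA i) (hfB i) _
      _ ≤ C * ∫ x, lipConst (f i) x ∂μ := hPoincare _ ⟨K, hK⟩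
      _ ≤ C * (M / t i * μ.real (St i)) := by
          gcongr
          exact integral_le_mul_measureReal_of_le_of_eq_zero (div_pos hM (htpos i)).le
            (lipConst_nonneg _) (hgradbd i) (hgradsupp i)
      _ = C * M * ((1 / t i) * (μ (St i)).toReal) := by rw [measureReal_def]; ring
  have hlim := hSt.const_mul (C * M)
  rw [mul_zero] at hlim
  exact (ge_of_tendsto' hlim hbound).not_gt hgap

/-- A Poincaré inequality on a compact metric measure space is incompatible with
a sequence of Lipschitz cutoff functions separating two sets of positive measure
whose gradients concentrate on sets of measure `o(t)` with gradient bound `M/t`. -/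
theorem stmt_16 {X : Type*} [MetricSpace X] [CompactSpace X]
    [MeasurableSpace X] [BorelSpace X]
    (μ : Measure X) [IsFiniteMeasure μ] (C : ℝ) (hC : 0 < C)
    (hPoincare : ∀ f : X → ℝ, (∃ K : NNReal, LipschitzWith K f) →
      ∫ x, |f x - ⨍ y, f y ∂μ| ∂μ ≤ C * ∫ x, lipConst f x ∂μ)
    (A B S : Set X) (hA : IsOpen A) (hB : IsOpen B) (hAB : Disjoint A B)
    (hcover : A ∪ S ∪ B = Set.univ) (hμA : 0 < μ A) (hμB : 0 < μ B)
    (cA cB M : ℝ) (hcA : 0 < cA) (hcB : cB < 0) (hM : 0 < M)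
    (t : ℕ → ℝ) (htpos : ∀ i, 0 < t i) (ht0 : Tendsto t atTop (nhds 0))
    (f : ℕ → X → ℝ) (hfLip : ∀ i, ∃ K : NNReal, LipschitzWith K (f i))
    (hfA : ∀ i, ∀ x ∈ A, f i x = cA) (hfB : ∀ i, ∀ x ∈ B, f i x = cB)
    (hfbd : ∀ i x, |f i x| ≤ M)
    (St : ℕ → Set X) (hSsub : ∀ i, S ⊆ St i)
    (hgradsupp : ∀ i, ∀ x ∉ St i, lipConst (f i) x = 0)
    (hgradbd : ∀ i x, lipConst (f i) x ≤ M / t i)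
    (hSt : Tendsto (fun i => (1 / t i) * (μ (St i)).toReal) atTop (nhds 0)) :
    False :=
  stmt_16_general μ C hC hPoincare A B hA hB hAB hμA hμB cA cB M hcA hcB hM t htpos f hfLip hfA hfB
    St hgradsupp hgradbd hSt
end
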